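/- arXiv:2312.03579 — 3 statements merged into one kernel-verified Lean document; each statement's English description precedes it below -/
import Mathlib

section
/- Let X be a finite nonempty set with probability distribution P : X → (0,1] summing to 1, and f, g functions on X. If =(f,g) holds and |f(X)| = |g(X)|, then f ≈* g holds, i.e., the multiset of marginal probabilities {{ P_f(a) : a ∈ f(X) }} equals {{ P_g(b) : b ∈ g(X) }}, where P_f(a) = ∑_{s : f(s)=a} P(s). -/
/-- The multiset of marginal probabilities of `f` over its image. -/
noncomputable def margMultiset {X A : Type*} [Fintype X] [DecidableEq A]
    (P : X → ℝ) (f : X → A) : Multiset ℝ :=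
  (Finset.univ.image f).val.map
    (fun a => ∑ s ∈ Finset.univ.filter (fun s => f s = a), P s)

theorem stmt_3 {X A B : Type*} [Fintype X] [Nonempty X]
    [DecidableEq A] [DecidableEq B]
    (f : X → A) (g : X → B) (P : X → ℝ)
    (hP : ∀ s, 0 < P s) (hsum : ∑ s, P s = 1)
    (hfd : ∀ s s', f s = f s' → g s = g s')
    (hcard : (Finset.univ.image f).card = (Finset.univ.image g).card) :
    margMultiset P f = margMultiset P g := by
  classical
  set φ : A → B := fun a =>
    if h : ∃ s, f s = a then g h.choose else g (Classical.arbitrary X) with hφ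
  have hφf : ∀ s, φ (f s) = g s := by
    intro s
    have h : ∃ t, f t = f s := ⟨s, rfl⟩
    simp only [hφ, dif_pos h]
    exact hfd _ _ h.choose_spec
  have himg : (Finset.univ.image f).image φ = Finset.univ.image g := by
    ext b
    simp only [Finset.mem_image, Finset.mem_univ, true_and]
    constructor
    · rintro ⟨a, ⟨s, rfl⟩, rfl⟩; exact ⟨s, (hφf s).symm⟩
    · rintro ⟨s, rfl⟩; exact ⟨f s, ⟨s, rfl⟩, hφf s⟩
  have hinj : Set.InjOn φ (Finset.univ.image f) := by
    apply Finset.injOn_of_card_image_eq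
    rw [himg, hcard]
  unfold margMultiset
  rw [← himg, Finset.image_val_of_injOn hinj, Multiset.map_map]
  apply Multiset.map_congr rfl
  intro a ha
  apply Finset.sum_congr _ (fun _ _ => rfl)
  ext s
  simp only [Finset.mem_filter, Finset.mem_univ, true_and, Function.comp]
  constructor
  · rintro rfl; exact (hφf s).symm
  · intro h
    have : φ (f s) = φ a := (hφf s).trans h
    exact hinj (Finset.mem_image.mpr ⟨s, Finset.mem_univ s, rfl⟩) (by exact_mod_cast ha) this
end

section
/- Soundness of the k-cycle rule: let k be an odd positive integer, X a finite nonempty set with probability distribution P : X → (0,1] summing to 1, and x_0, x_1, ..., x_k functions on X (with indices mod k+1). Suppose that for every even i with 0 ≤ i ≤ k−1 the functional dependency =(x_i, x_{i+1}) holds, and for every odd j with 1 ≤ j ≤ k the marginal distribution equivalence x_j ≈* x_{j+1 mod (k+1)} holds. Then for every even i with 0 ≤ i ≤ k−1, both the reverse functional dependency =(x_{i+1}, x_i) and the marginal distribution equivalence x_i ≈* x_{i+1} hold. -/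
/-- Functional dependency `=(f,g)`. -/
def FD {X A B : Type*} (f : X → A) (g : X → B) : Prop :=
  ∀ s s', f s = f s' → g s = g s'

open Finset Fin.NatCast

theorem Fin.apply_eq_apply_zero_of_forall_apply_succ_le {α : Type*} [PartialOrder α] {k : ℕ}
    {n : Fin (k + 1) → α} (h : ∀ i, n (i + 1) ≤ n i) (i : Fin (k + 1)) : n i = n 0 := by
  have chain : ∀ j m : ℕ, j ≤ m → n m ≤ n j := by
    intro j m hjm
    induction m, hjm using Nat.le_induction with
    | base => exact le_rfl
    | succ m _ ih => simpa only [Nat.cast_succ] using (h m).trans ih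
  have hle : n i ≤ n 0 := by simpa using chain 0 i (Nat.zero_le _)
  -- the cycle closes because `((k + 1 : ℕ) : Fin (k + 1)) = 0`
  have hge : n 0 ≤ n i := by simpa using chain i (k + 1) (by omega)
  exact le_antisymm hle hge

section

variable {X A B : Type*} [Fintype X] [DecidableEq A] [DecidableEq B] {f : X → A} {g : X → B}

theorem fd_iff_injOn_fst :
    FD f g ↔ Set.InjOn Prod.fst (univ.image fun s => (f s, g s) : Set (A × B)) := by
  simp only [coe_image, coe_univ, Set.image_univ]
  constructor
  · rintro h _ ⟨s, rfl⟩ _ ⟨s', rfl⟩ hs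
    exact Prod.ext hs (h s s' hs)
  · exact fun h s s' hs => congrArg Prod.snd (h ⟨s, rfl⟩ ⟨s', rfl⟩ hs)

theorem fd_iff_injOn_snd :
    FD g f ↔ Set.InjOn Prod.snd (univ.image fun s => (f s, g s) : Set (A × B)) := by
  simp only [coe_image, coe_univ, Set.image_univ]
  constructor
  · rintro h _ ⟨s, rfl⟩ _ ⟨s', rfl⟩ hs
    exact Prod.ext (h s s' hs) hs
  · exact fun h s s' hs => congrArg Prod.fst (h ⟨s, rfl⟩ ⟨s', rfl⟩ hs)

theorem FD.card_image_pair (h : FD f g) : #(univ.image fun s => (f s, g s)) = #(univ.image f) := by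
  rw [← card_image_of_injOn (fd_iff_injOn_fst.1 h), image_image]
  rfl

theorem FD.card_image_le (h : FD f g) : #(univ.image g) ≤ #(univ.image f) :=
  calc #(univ.image g) = #((univ.image fun s => (f s, g s)).image Prod.snd) := by
        rw [image_image]; rfl
    _ ≤ #(univ.image fun s => (f s, g s)) := Finset.card_image_le
    _ = #(univ.image f) := h.card_image_pair

theorem FD.symm_of_card_image_eq (h : FD f g) (hcard : #(univ.image f) = #(univ.image g)) :
    FD g f := by
  refine fd_iff_injOn_snd.2 (injOn_of_card_image_eq ?_)
  rw [image_image, h.card_image_pair, hcard]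
  rfl

theorem card_margMultiset (P : X → ℝ) (f : X → A) :
    Multiset.card (margMultiset P f) = #(univ.image f) :=
  Multiset.card_map _ _

theorem margMultiset_comp_of_injOn (P : X → ℝ) (f : X → A) {φ : A → B}
    (hφ : Set.InjOn φ (univ.image f)) :
    margMultiset P (φ ∘ f) = margMultiset P f := by
  unfold margMultiset
  rw [← image_image, image_val_of_injOn hφ, Multiset.map_map]
  refine Multiset.map_congr rfl fun a ha => ?_
  obtain ⟨s₀, -, rfl⟩ := mem_image.1 ha
  refine sum_congr (filter_congr fun s _ => ?_) fun _ _ => rfl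
  exact hφ.eq_iff (by simp) (by simp)

theorem margMultiset_eq_of_fd_of_fd (P : X → ℝ) (hfg : FD f g) (hgf : FD g f) :
    margMultiset P f = margMultiset P g :=
  (margMultiset_comp_of_injOn P _ (fd_iff_injOn_fst.1 hfg)).trans
    (margMultiset_comp_of_injOn P _ (fd_iff_injOn_snd.1 hgf)).symm

end

theorem stmt_4_general {X A : Type*} [Fintype X] [DecidableEq A]
    (k : ℕ)
    (P : X → ℝ)
    (x : Fin (k + 1) → X → A)
    (hfd : ∀ i : Fin (k + 1), Even (i : ℕ) → FD (x i) (x (i + 1)))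
    (hmde : ∀ j : Fin (k + 1), Odd (j : ℕ) →
      margMultiset P (x j) = margMultiset P (x (j + 1))) :
    ∀ i : Fin (k + 1), Even (i : ℕ) →
      FD (x (i + 1)) (x i) ∧ margMultiset P (x i) = margMultiset P (x (i + 1)) := by
  have hstep : ∀ i : Fin (k + 1), #(univ.image (x (i + 1))) ≤ #(univ.image (x i)) := by
    intro i
    rcases Nat.even_or_odd (i : ℕ) with hi | hi
    · exact (hfd i hi).card_image_le
    · rw [← card_margMultiset P, ← card_margMultiset P, hmde i hi]
  have hconst :=
    Fin.apply_eq_apply_zero_of_forall_apply_succ_le (n := fun i => #(univ.image (x i))) hstep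
  intro i hi
  have hback := (hfd i hi).symm_of_card_image_eq ((hconst i).trans (hconst (i + 1)).symm)
  exact ⟨hback, margMultiset_eq_of_fd_of_fd P (hfd i hi) hback⟩

theorem stmt_4 {X A : Type*} [Fintype X] [Nonempty X] [DecidableEq A]
    (k : ℕ) (hk : Odd k) (hkpos : 0 < k)
    (P : X → ℝ) (hP : ∀ s, 0 < P s) (hsum : ∑ s, P s = 1)
    (x : Fin (k + 1) → X → A)
    (hfd : ∀ i : Fin (k + 1), Even (i : ℕ) → FD (x i) (x (i + 1)))
    (hmde : ∀ j : Fin (k + 1), Odd (j : ℕ) →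
      margMultiset P (x j) = margMultiset P (x (j + 1))) :
    ∀ i : Fin (k + 1), Even (i : ℕ) →
      FD (x (i + 1)) (x i) ∧ margMultiset P (x i) = margMultiset P (x (i + 1)) :=
  stmt_4_general k P x hfd hmde
end

section
/- The 3-cycle rule is not sound for the relation ≈_max: there exists a finite probabilistic team X with functions x_0, x_1, x_2, x_3 such that =(x_0,x_1), x_1 ≈_max x_2, =(x_2,x_3), and x_3 ≈_max x_0 all hold, but =(x_1,x_0) does not hold. (Witness: the uniform distribution over the four tuples (0,0,0,0), (1,0,0,0), (2,1,1,1), (2,1,2,1) for (x_0,x_1,x_2,x_3).) -/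
/-- The maximum marginal probability of `f` (as an element of `WithBot ℝ`). -/
noncomputable def maxMarg {X A : Type*} [Fintype X] [DecidableEq A]
    (P : X → ℝ) (f : X → A) : WithBot ℝ :=
  ((Finset.univ.image f).image
    (fun a => ∑ s ∈ Finset.univ.filter (fun s => f s = a), P s)).max

/-- `f ≈_max g`. -/
noncomputable def MaxRel {X A B : Type*} [Fintype X] [DecidableEq A] [DecidableEq B]
    (P : X → ℝ) (f : X → A) (g : X → B) : Prop :=
  maxMarg P f = maxMarg P g


open Finset

section MaxMarginal

variable {X A B : Type*} [Fintype X] [DecidableEq A] [DecidableEq B]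

lemma maxMarg_eq_of_isGreatest (P : X → ℝ) (f : X → A) {m : ℝ}
    (hm : ∃ s, ∑ t ∈ univ.filter (fun t => f t = f s), P t = m)
    (hle : ∀ s, ∑ t ∈ univ.filter (fun t => f t = f s), P t ≤ m) :
    maxMarg P f = m := by
  obtain ⟨s, hs⟩ := hm
  refine le_antisymm (Finset.max_le ?_) ?_
  · simp only [mem_image, mem_univ, true_and]
    rintro _ ⟨_, ⟨t, rfl⟩, rfl⟩
    exact WithBot.coe_le_coe.mpr (hle t)
  · exact hs ▸ le_max (mem_image_of_mem _ (mem_image_of_mem f (mem_univ s)))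

lemma maxMarg_const_of_isGreatest_card (c : ℝ) (hc : 0 ≤ c) (f : X → A) {k : ℕ}
    (hk : ∃ s, #(univ.filter fun t => f t = f s) = k)
    (hle : ∀ s, #(univ.filter fun t => f t = f s) ≤ k) :
    maxMarg (fun _ => c) f = ↑(k * c) := by
  refine maxMarg_eq_of_isGreatest _ f ?_ fun s => ?_ <;> simp only [sum_const, nsmul_eq_mul]
  · obtain ⟨s, hs⟩ := hk
    exact ⟨s, by rw [hs]⟩
  · exact mul_le_mul_of_nonneg_right (by exact_mod_cast hle s) hc

lemma maxRel_const_of_isGreatest_card (c : ℝ) (hc : 0 ≤ c) (f : X → A) (g : X → B) (k : ℕ)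
    (hfk : ∃ s, #(univ.filter fun t => f t = f s) = k)
    (hfle : ∀ s, #(univ.filter fun t => f t = f s) ≤ k)
    (hgk : ∃ s, #(univ.filter fun t => g t = g s) = k)
    (hgle : ∀ s, #(univ.filter fun t => g t = g s) ≤ k) :
    MaxRel (fun _ => c) f g :=
  (maxMarg_const_of_isGreatest_card c hc f hfk hfle).trans
    (maxMarg_const_of_isGreatest_card c hc g hgk hgle).symm

end MaxMarginal

theorem stmt_8 :
    ∃ (X : Type) (_ : Fintype X) (_ : Nonempty X) (P : X → ℝ)
      (x0 x1 x2 x3 : X → ℕ),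
      (∀ s, 0 < P s) ∧ (∑ s, P s = 1) ∧
      FD x0 x1 ∧ MaxRel P x1 x2 ∧ FD x2 x3 ∧ MaxRel P x3 x0 ∧
      ¬ FD x1 x0 := by
  -- the columns of the rows (0,0,0,0), (1,0,0,0), (2,1,1,1), (2,1,2,1)
  refine ⟨Fin 4, inferInstance, inferInstance, fun _ => 1 / 4,
    ![0, 1, 2, 2], ![0, 0, 1, 1], ![0, 0, 1, 2], ![0, 0, 1, 1],
    fun _ => by norm_num, by norm_num, by unfold FD; decide,
    maxRel_const_of_isGreatest_card _ (by norm_num) _ _ 2 (by decide) (by decide) (by decide)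
      (by decide),
    by unfold FD; decide,
    maxRel_const_of_isGreatest_card _ (by norm_num) _ _ 2 (by decide) (by decide) (by decide)
      (by decide),
    fun h => absurd (h 0 1 rfl) (by decide)⟩
end
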